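/- arXiv:1801.10578 — 4 statements merged into one kernel-verified Lean document; each statement's English description precedes it below -/
import Mathlib

section
/- Let f : ℝ^d → ℝ^K be a multi-class classifier whose components f_i are each Lipschitz. Let c be such that f_c(x₀) > f_j(x₀) for all j ≠ c, and for each j ≠ c let L_j > 0 be a Lipschitz constant (in ℓp norm) of the function x ↦ f_c(x) - f_j(x). Then for all δ with ‖δ‖_p ≤ min_{j ≠ c} (f_c(x₀) - f_j(x₀))/L_j, we have f_c(x₀ + δ) ≥ f_j(x₀ + δ) for all j ≠ c; i.e., the prediction does not change. -/
open scoped ENNReal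

theorem nonneg_add_of_norm_le_div {E : Type*} [SeminormedAddCommGroup E] {g : E → ℝ} {L : ℝ}
    (hL : 0 < L) (hg : ∀ x y, |g x - g y| ≤ L * ‖x - y‖) {x₀ δ : E} (hδ : ‖δ‖ ≤ g x₀ / L) :
    0 ≤ g (x₀ + δ) := by
  have hdrop : g x₀ - g (x₀ + δ) ≤ L * ‖δ‖ := by
    simpa [abs_sub_comm] using (abs_le.1 (hg x₀ (x₀ + δ))).2
  have hmargin : L * ‖δ‖ ≤ g x₀ := (le_div_iff₀' hL).1 hδ
  linarith

theorem clever_untargeted_lower_bound_general {d K : ℕ} {p : ℝ≥0∞} [Fact (1 ≤ p)]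
    (f : PiLp p (fun _ : Fin d => ℝ) → Fin K → ℝ)
    (x₀ : PiLp p (fun _ : Fin d => ℝ)) (c : Fin K)
    (L : Fin K → ℝ) (hL : ∀ j : Fin K, j ≠ c → 0 < L j)
    (hLip : ∀ j : Fin K, j ≠ c →
      ∀ x y : PiLp p (fun _ : Fin d => ℝ),
        |(f x c - f x j) - (f y c - f y j)| ≤ L j * ‖x - y‖) :
    ∀ δ : PiLp p (fun _ : Fin d => ℝ),
      (∀ j : Fin K, j ≠ c → ‖δ‖ ≤ (f x₀ c - f x₀ j) / L j) →
      ∀ j : Fin K, j ≠ c → f (x₀ + δ) j ≤ f (x₀ + δ) c :=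
  fun _ hδ j hj => sub_nonneg.1 <|
    nonneg_add_of_norm_le_div (g := fun x => f x c - f x j) (hL j hj) (hLip j hj) (hδ j hj)

/-- formal guarantee on the robustness lower bound for untargeted attacks.
If the prediction at `x₀` is (uniquely) class `c` and for each `j ≠ c` the function
`f · c - f · j` is Lipschitz with constant `L j > 0` in ℓp norm, then any perturbation
whose ℓp norm is at most `min_{j ≠ c} (f x₀ c - f x₀ j) / L j` cannot change the prediction. -/
theorem clever_untargeted_lower_bound {d K : ℕ} (hK : 2 ≤ K) {p : ℝ≥0∞} [Fact (1 ≤ p)]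
    (f : PiLp p (fun _ : Fin d => ℝ) → Fin K → ℝ)
    (x₀ : PiLp p (fun _ : Fin d => ℝ)) (c : Fin K)
    (hc : ∀ j : Fin K, j ≠ c → f x₀ j < f x₀ c)
    (L : Fin K → ℝ) (hL : ∀ j : Fin K, j ≠ c → 0 < L j)
    (hLip : ∀ j : Fin K, j ≠ c →
      ∀ x y : PiLp p (fun _ : Fin d => ℝ),
        |(f x c - f x j) - (f y c - f y j)| ≤ L j * ‖x - y‖) :
    ∀ δ : PiLp p (fun _ : Fin d => ℝ),
      (∀ j : Fin K, j ≠ c → ‖δ‖ ≤ (f x₀ c - f x₀ j) / L j) →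
      ∀ j : Fin K, j ≠ c → f (x₀ + δ) j ≤ f (x₀ + δ) c :=
  clever_untargeted_lower_bound_general f x₀ c L hL hLip
end

section
/- (Targeted attack lower bound) Let g = f_c - f_j with g(x₀) > 0, and suppose g is Lipschitz with constant L_j on the closed ball B_p(x₀, R) with respect to the ℓp norm. Then for every δ with ‖δ‖_p ≤ min{g(x₀)/L_j, R}, g(x₀ + δ) ≥ 0, so x₀ + δ is not classified as class j in preference to class c. -/
open scoped ENNReal

section LipschitzOnLowerBound

variable {E : Type*} [SeminormedAddCommGroup E] {s : Set E} {g : E → ℝ} {L : ℝ} {x y : E}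

theorem sub_mul_norm_sub_le_of_abs_sub_le
    (hLip : ∀ x ∈ s, ∀ y ∈ s, |g x - g y| ≤ L * ‖x - y‖) (hx : x ∈ s) (hy : y ∈ s) :
    g x - L * ‖y - x‖ ≤ g y := by
  have h := (abs_sub_le_iff.mp (hLip y hy x hx)).2
  linarith

theorem nonneg_of_abs_sub_le_of_norm_sub_le_div
    (hLip : ∀ x ∈ s, ∀ y ∈ s, |g x - g y| ≤ L * ‖x - y‖) (hL : 0 ≤ L) (hx : x ∈ s) (hy : y ∈ s)
    (hgx : 0 ≤ g x) (hxy : ‖y - x‖ ≤ g x / L) : 0 ≤ g y := by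
  have hdrop : L * ‖y - x‖ ≤ g x := mul_comm L _ ▸ mul_le_of_le_div₀ hgx hL hxy
  linarith [sub_mul_norm_sub_le_of_abs_sub_le hLip hx hy]

end LipschitzOnLowerBound

theorem clever_targeted_lower_bound_general {d : ℕ} {p : ℝ≥0∞} [Fact (1 ≤ p)]
    (g : PiLp p (fun _ : Fin d => ℝ) → ℝ)
    (x₀ : PiLp p (fun _ : Fin d => ℝ)) (R L : ℝ) (hL : 0 < L)
    (hLip : ∀ x ∈ Metric.closedBall x₀ R, ∀ y ∈ Metric.closedBall x₀ R,
      |g x - g y| ≤ L * ‖x - y‖)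
    (hg : 0 < g x₀) :
    ∀ δ : PiLp p (fun _ : Fin d => ℝ), ‖δ‖ ≤ min (g x₀ / L) R → 0 ≤ g (x₀ + δ) := by
  intro δ hδ
  obtain ⟨hδg, hδR⟩ := le_min_iff.mp hδ
  have hδx₀ : ‖x₀ + δ - x₀‖ = ‖δ‖ := by rw [add_sub_cancel_left]
  have hx₀ : x₀ ∈ Metric.closedBall x₀ R := Metric.mem_closedBall_self ((norm_nonneg δ).trans hδR)
  have hx : x₀ + δ ∈ Metric.closedBall x₀ R := by
    rwa [Metric.mem_closedBall, dist_eq_norm, hδx₀]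
  exact nonneg_of_abs_sub_le_of_norm_sub_le_div hLip hL.le hx₀ hx hg.le (hδx₀ ▸ hδg)

/-- targeted attack lower bound.  If `g = f_c - f_j` is Lipschitz with
constant `L > 0` on the closed ℓp ball of radius `R` around `x₀`, and `g x₀ > 0`, then
every `δ` with `‖δ‖_p ≤ min (g x₀ / L) R` satisfies `g (x₀ + δ) ≥ 0`, i.e. `x₀ + δ`
is not classified as class `j` in preference to class `c`. -/
theorem clever_targeted_lower_bound {d : ℕ} {p : ℝ≥0∞} [Fact (1 ≤ p)]
    (g : PiLp p (fun _ : Fin d => ℝ) → ℝ)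
    (x₀ : PiLp p (fun _ : Fin d => ℝ)) (R L : ℝ) (hR : 0 < R) (hL : 0 < L)
    (hLip : ∀ x ∈ Metric.closedBall x₀ R, ∀ y ∈ Metric.closedBall x₀ R,
      |g x - g y| ≤ L * ‖x - y‖)
    (hg : 0 < g x₀) :
    ∀ δ : PiLp p (fun _ : Fin d => ℝ), ‖δ‖ ≤ min (g x₀ / L) R → 0 ≤ g (x₀ + δ) :=
  clever_targeted_lower_bound_general g x₀ R L hL hLip hg
end

section
/- U hyperplanes in ℝ^d partition ℝ^d into at most ∑_{i=0}^{d} C(U, i) regions; formally, the number of distinct sign vectors (s_1, …, s_U) ∈ {-1, +1}^U realized as (sign(w_1·x + b_1), …, sign(w_U·x + b_U)) over points x avoiding all hyperplanes is at most ∑_{i=0}^{d} C(U, i). -/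
def SignSet {E : Type} [AddCommGroup E] [Module ℝ E] {U : ℕ}
    (f : Fin U → E →ₗ[ℝ] ℝ) (b : Fin U → ℝ) : Set (Fin U → ℝ) :=
  {s | ∃ x : E, (∀ r, f r x + b r ≠ 0) ∧ (∀ r, s r = Real.sign (f r x + b r))}

lemma signSet_finite {E : Type} [AddCommGroup E] [Module ℝ E] {U : ℕ}
    (f : Fin U → E →ₗ[ℝ] ℝ) (b : Fin U → ℝ) : (SignSet f b).Finite := by
  have h : SignSet f b ⊆ Set.pi Set.univ (fun _ : Fin U => ({-1, 1} : Set ℝ)) := by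
    rintro s ⟨x, hx, hs⟩ r _
    rcases Real.sign_apply_eq_of_ne_zero _ (hx r) with h | h
    · rw [hs r, h]; exact Or.inl rfl
    · rw [hs r, h]; exact Or.inr rfl
  exact Set.Finite.subset (Set.Finite.pi (fun _ => (Set.finite_singleton 1).insert (-1))) h

lemma pascal_sum (U D : ℕ) :
    ∑ i ∈ Finset.range (D + 2), (U + 1).choose i =
      ∑ i ∈ Finset.range (D + 2), U.choose i + ∑ i ∈ Finset.range (D + 1), U.choose i := by
  rw [Finset.sum_range_succ' _ (D + 1), Finset.sum_range_succ' (fun i => U.choose i) (D + 1)]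
  simp only [Nat.choose_succ_succ, Finset.sum_add_distrib, Nat.choose_zero_right,
    Nat.succ_eq_add_one]
  omega

lemma pos_of_one_eq_sign {v : ℝ} (h : (1 : ℝ) = Real.sign v) : 0 < v := by
  rcases lt_trichotomy v 0 with hv | hv | hv
  · rw [Real.sign_of_neg hv] at h; norm_num at h
  · rw [hv, Real.sign_zero] at h; norm_num at h
  · exact hv

lemma neg_of_neg_one_eq_sign {v : ℝ} (h : (-1 : ℝ) = Real.sign v) : v < 0 := by
  rcases lt_trichotomy v 0 with hv | hv | hv
  · exact hv
  · rw [hv, Real.sign_zero] at h; norm_num at h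
  · rw [Real.sign_of_pos hv] at h; norm_num at h

lemma combo_neg {t a c : ℝ} (h0 : 0 ≤ t) (h1 : t ≤ 1) (ha : a < 0) (hc : c < 0) :
    (1 - t) * a + t * c < 0 := by
  rcases h0.eq_or_lt with rfl | ht
  · simpa using ha
  · have h2 : t * c < 0 := mul_neg_of_pos_of_neg ht hc
    have h3 : (1 - t) * a ≤ 0 := mul_nonpos_of_nonneg_of_nonpos (by linarith) ha.le
    linarith

lemma combo_pos {t a c : ℝ} (h0 : 0 ≤ t) (h1 : t ≤ 1) (ha : 0 < a) (hc : 0 < c) :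
    0 < (1 - t) * a + t * c := by
  rcases h0.eq_or_lt with rfl | ht
  · simpa using ha
  · have h2 : 0 < t * c := mul_pos ht hc
    have h3 : 0 ≤ (1 - t) * a := mul_nonneg (by linarith) ha.le
    linarith

set_option maxHeartbeats 1000000 in
lemma key (U : ℕ) : ∀ (E : Type) [AddCommGroup E] [Module ℝ E] [FiniteDimensional ℝ E]
    (f : Fin U → E →ₗ[ℝ] ℝ) (b : Fin U → ℝ),
    (SignSet f b).ncard ≤ ∑ i ∈ Finset.range (Module.finrank ℝ E + 1), U.choose i := by
  induction U with
  | zero =>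
      intro E _ _ _ f b
      have h1 : (SignSet f b).ncard ≤ 1 := by
        have := Set.ncard_le_ncard (Set.subset_univ (SignSet f b)) Set.finite_univ
        rwa [Set.ncard_univ, Nat.card_unique] at this
      have h2 : 1 ≤ ∑ i ∈ Finset.range (Module.finrank ℝ E + 1), Nat.choose 0 i :=
        Finset.single_le_sum (f := fun i => Nat.choose 0 i) (fun _ _ => Nat.zero_le _)
          (Finset.mem_range.mpr (Nat.succ_pos _))
      omega
  | succ U ih =>
      intro E _ _ _ f b
      classical
      set n := Module.finrank ℝ E with hn
      set L : Fin (U + 1) := Fin.last U with hL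
      set f' : Fin U → E →ₗ[ℝ] ℝ := fun r => f r.castSucc with hf'
      set b' : Fin U → ℝ := fun r => b r.castSucc with hb'
      set S := SignSet f b with hS
      set S' := SignSet f' b' with hS'
      let π : (Fin (U + 1) → ℝ) → (Fin U → ℝ) := fun s => s ∘ Fin.castSucc
      have hπ : ∀ s ∈ S, π s ∈ S' := by
        rintro s ⟨x, hx, hs⟩; exact ⟨x, fun r => hx _, fun r => hs _⟩
      have hsnoc : ∀ s : Fin (U + 1) → ℝ, s = Fin.snoc (π s) (s L) := by
        intro s; funext r
        refine Fin.lastCases ?_ ?_ r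
        · simp [hL]
        · intro i; simp [π]
      have hS'fin : S'.Finite := signSet_finite f' b'
      have hpm : ∀ s ∈ S, s L = 1 ∨ s L = -1 := by
        rintro s ⟨x, hx, hs⟩
        rcases Real.sign_apply_eq_of_ne_zero _ (hx L) with h | h
        · exact Or.inr (by rw [hs L, h])
        · exact Or.inl (by rw [hs L, h])
      by_cases hfL : f L = 0
      · -- degenerate case : last functional is zero
        have hinj : Set.InjOn π S := by
          intro s1 h1 s2 h2 hps
          have e1 : s1 L = Real.sign (b L) := by
            obtain ⟨x, hx, hs⟩ := h1
            rw [hs L, hfL]; simp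
          have e2 : s2 L = Real.sign (b L) := by
            obtain ⟨x, hx, hs⟩ := h2
            rw [hs L, hfL]; simp
          rw [hsnoc s1, hsnoc s2, hps, e1, e2]
        have h1 : S.ncard ≤ S'.ncard := Set.ncard_le_ncard_of_injOn π hπ hinj hS'fin
        refine h1.trans ((ih E f' b').trans (Finset.sum_le_sum fun i _ => ?_))
        exact Nat.choose_le_choose i (Nat.le_succ U)
      · -- main case
        set T := {s' ∈ S' | Fin.snoc s' (1 : ℝ) ∈ S ∧ Fin.snoc s' (-1 : ℝ) ∈ S} with hT
        have hTsub : T ⊆ S' := fun s' hs' => hs'.1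
        have hTfin : T.Finite := hS'fin.subset hTsub
        -- Step A : S.ncard ≤ S'.ncard + T.ncard
        have stepA : S.ncard ≤ S'.ncard + T.ncard := by
          set φ : (Fin (U + 1) → ℝ) → (Fin U → ℝ) ⊕ (Fin U → ℝ) :=
            fun s => if π s ∈ T ∧ s L = -1 then Sum.inr (π s) else Sum.inl (π s) with hφ
          have hmaps : ∀ s ∈ S, φ s ∈ (Sum.inl '' S' ∪ Sum.inr '' T) := by
            intro s hs
            by_cases hc : π s ∈ T ∧ s L = -1
            · simp only [hφ, if_pos hc]; exact Or.inr ⟨π s, hc.1, rfl⟩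
            · simp only [hφ, if_neg hc]; exact Or.inl ⟨π s, hπ s hs, rfl⟩
          have hinj : Set.InjOn φ S := by
            intro s1 h1 s2 h2 he
            by_cases hc1 : π s1 ∈ T ∧ s1 L = -1 <;> by_cases hc2 : π s2 ∈ T ∧ s2 L = -1
            · simp only [hφ, if_pos hc1, if_pos hc2] at he
              have hp : π s1 = π s2 := Sum.inr.inj he
              rw [hsnoc s1, hsnoc s2, hp, hc1.2, hc2.2]
            · simp only [hφ, if_pos hc1, if_neg hc2] at he; exact absurd he (by simp)
            · simp only [hφ, if_neg hc1, if_pos hc2] at he; exact absurd he (by simp)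
            · simp only [hφ, if_neg hc1, if_neg hc2] at he
              have hp : π s1 = π s2 := Sum.inl.inj he
              by_cases hval : s1 L = s2 L
              · rw [hsnoc s1, hsnoc s2, hp, hval]
              · exfalso
                rcases hpm s1 h1 with e1 | e1 <;> rcases hpm s2 h2 with e2 | e2
                · exact hval (e1.trans e2.symm)
                · refine hc2 ⟨⟨hπ s2 h2, ?_, ?_⟩, e2⟩
                  · rw [← hp, ← e1, ← hsnoc s1]; exact h1
                  · rw [← e2, ← hsnoc s2]; exact h2
                · refine hc1 ⟨⟨hπ s1 h1, ?_, ?_⟩, e1⟩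
                  · rw [hp, ← e2, ← hsnoc s2]; exact h2
                  · rw [← e1, ← hsnoc s1]; exact h1
                · exact hval (e1.trans e2.symm)
          have htfin : (Sum.inl '' S' ∪ Sum.inr '' T).Finite := (hS'fin.image _).union (hTfin.image _)
          refine (Set.ncard_le_ncard_of_injOn φ hmaps hinj htfin).trans
            ((Set.ncard_union_le _ _).trans ?_)
          rw [Set.ncard_image_of_injective _ Sum.inl_injective,
            Set.ncard_image_of_injective _ Sum.inr_injective]
        -- Step B : T injects into a sign set on the kernel
        obtain ⟨y, hy⟩ : ∃ y, f L y ≠ 0 := by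
          by_contra h; push_neg at h; exact hfL (LinearMap.ext h)
        set x0 : E := ((-b L) / (f L y)) • y with hx0
        have hfx0 : f L x0 = -b L := by
          rw [hx0, map_smul, smul_eq_mul, div_mul_cancel₀ _ hy]
        set K := LinearMap.ker (f L) with hK
        set fK : Fin U → K →ₗ[ℝ] ℝ := fun r => (f' r).comp K.subtype with hfK
        set bK : Fin U → ℝ := fun r => f' r x0 + b' r with hbK
        have stepB : T ⊆ SignSet fK bK := by
          rintro s' ⟨hs', hplus, hminus⟩
          obtain ⟨xp, hxp, hsp⟩ := hplus
          obtain ⟨xm, hxm, hsm⟩ := hminus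
          have hp1 : 0 < f L xp + b L := by
            have h := hsp L
            rw [hL, Fin.snoc_last] at h
            exact pos_of_one_eq_sign h
          have hm1 : f L xm + b L < 0 := by
            have h := hsm L
            rw [hL, Fin.snoc_last] at h
            exact neg_of_neg_one_eq_sign h
          set A := f L xm + b L with hA
          set B := f L xp + b L with hB
          have hcont : Continuous (fun t : ℝ => (1 - t) * A + t * B) :=
            ((continuous_const.sub continuous_id).mul continuous_const).add
              (continuous_id.mul continuous_const)
          obtain ⟨t, ht, hgt⟩ : ∃ t ∈ Set.Icc (0 : ℝ) 1, (1 - t) * A + t * B = 0 := by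
            have hsub := intermediate_value_Icc (zero_le_one (α := ℝ)) hcont.continuousOn
            have h0 : (0 : ℝ) ∈ Set.Icc ((1 - (0:ℝ)) * A + 0 * B) ((1 - (1:ℝ)) * A + 1 * B) := by
              constructor <;> nlinarith
            obtain ⟨t, ht, hgt⟩ := hsub h0
            exact ⟨t, ht, hgt⟩
          set z : E := xm + t • (xp - xm) with hz
          have hgz : ∀ r : Fin (U + 1), f r z + b r
              = (1 - t) * (f r xm + b r) + t * (f r xp + b r) := by
            intro r
            rw [hz, map_add, map_smul, map_sub, smul_eq_mul]
            ring
          have hzL : f L z + b L = 0 := by rw [hgz L, ← hA, ← hB]; exact hgt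
          have hsr : ∀ r : Fin U, f' r z + b' r ≠ 0 ∧ s' r = Real.sign (f' r z + b' r) := by
            intro r
            have e1 : s' r = Real.sign (f' r xp + b' r) := by
              have h := hsp r.castSucc
              rwa [Fin.snoc_castSucc] at h
            have e2 : s' r = Real.sign (f' r xm + b' r) := by
              have h := hsm r.castSucc
              rwa [Fin.snoc_castSucc] at h
            have hne1 : f' r xp + b' r ≠ 0 := hxp r.castSucc
            have hne2 : f' r xm + b' r ≠ 0 := hxm r.castSucc
            have hval : f' r z + b' r
                = (1 - t) * (f' r xm + b' r) + t * (f' r xp + b' r) := hgz r.castSucc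
            rcases Real.sign_apply_eq_of_ne_zero _ hne2 with hsg | hsg
            · have ham : f' r xm + b' r < 0 := neg_of_neg_one_eq_sign hsg.symm
              have hsg1 : Real.sign (f' r xp + b' r) = -1 := by rw [← e1, e2, hsg]
              have hap : f' r xp + b' r < 0 := neg_of_neg_one_eq_sign hsg1.symm
              have hneg : f' r z + b' r < 0 := by
                rw [hval]; exact combo_neg ht.1 ht.2 ham hap
              exact ⟨hneg.ne, by rw [Real.sign_of_neg hneg, e2, hsg]⟩
            · have ham : 0 < f' r xm + b' r := pos_of_one_eq_sign hsg.symm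
              have hsg1 : Real.sign (f' r xp + b' r) = 1 := by rw [← e1, e2, hsg]
              have hap : 0 < f' r xp + b' r := pos_of_one_eq_sign hsg1.symm
              have hpos : 0 < f' r z + b' r := by
                rw [hval]; exact combo_pos ht.1 ht.2 ham hap
              exact ⟨hpos.ne', by rw [Real.sign_of_pos hpos, e2, hsg]⟩
          have hzk : z - x0 ∈ K := by
            rw [hK, LinearMap.mem_ker, map_sub, hfx0]
            linarith [hzL]
          have hval2 : ∀ r : Fin U, fK r ⟨z - x0, hzk⟩ + bK r = f' r z + b' r := by
            intro r
            simp only [hfK, hbK, LinearMap.coe_comp, Function.comp_apply,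
              Submodule.coe_subtype, map_sub]
            ring
          exact ⟨⟨z - x0, hzk⟩, fun r => by rw [hval2 r]; exact (hsr r).1,
            fun r => by rw [hval2 r]; exact (hsr r).2⟩
        -- Step C : dimension count
        have hrange : LinearMap.range (f L) = ⊤ := by
          rw [LinearMap.range_eq_top]
          intro c
          exact ⟨(c / (f L y)) • y, by rw [map_smul, smul_eq_mul, div_mul_cancel₀ _ hy]⟩
        have hdim : Module.finrank ℝ K + 1 = n := by
          have h := LinearMap.finrank_range_add_finrank_ker (f L)
          rw [hrange, finrank_top, Module.finrank_self, ← hK] at h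
          rw [hn]
          omega
        obtain ⟨m, hm⟩ : ∃ m, n = m + 1 := ⟨n - 1, by omega⟩
        rw [hm]
        have hKm : Module.finrank ℝ K = m := by omega
        have hT_le : T.ncard ≤ ∑ i ∈ Finset.range (m + 1), U.choose i := by
          refine (Set.ncard_le_ncard stepB (signSet_finite fK bK)).trans ?_
          have := ih K fK bK
          rwa [hKm] at this
        have hS'_le : S'.ncard ≤ ∑ i ∈ Finset.range (m + 2), U.choose i := by
          have h := ih E f' b'
          rw [← hn, hm] at h
          exact h
        calc S.ncard ≤ S'.ncard + T.ncard := stepA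
          _ ≤ ∑ i ∈ Finset.range (m + 2), U.choose i
              + ∑ i ∈ Finset.range (m + 1), U.choose i := by omega
          _ = ∑ i ∈ Finset.range (m + 2), (U + 1).choose i := (pascal_sum U m).symm

/-- `U` hyperplanes in `ℝ^d` realize at most `∑_{i=0}^{d} C(U, i)` distinct
sign vectors over points avoiding all hyperplanes. -/
theorem sign_patterns_card_le {d U : ℕ}
    (w : Fin U → EuclideanSpace ℝ (Fin d)) (b : Fin U → ℝ) :
    {s : Fin U → ℝ | ∃ x : EuclideanSpace ℝ (Fin d),
        (∀ r : Fin U, (∑ i, w r i * x i) + b r ≠ 0) ∧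
        (∀ r : Fin U, s r = Real.sign ((∑ i, w r i * x i) + b r))}.Finite ∧
    {s : Fin U → ℝ | ∃ x : EuclideanSpace ℝ (Fin d),
        (∀ r : Fin U, (∑ i, w r i * x i) + b r ≠ 0) ∧
        (∀ r : Fin U, s r = Real.sign ((∑ i, w r i * x i) + b r))}.ncard ≤
      ∑ i ∈ Finset.range (d + 1), U.choose i := by
  let f : Fin U → EuclideanSpace ℝ (Fin d) →ₗ[ℝ] ℝ := fun r =>
    { toFun := fun x => ∑ i, w r i * x i
      map_add' := fun x y => by
        simp only [PiLp.add_apply, mul_add, Finset.sum_add_distrib]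
      map_smul' := fun c x => by
        simp only [PiLp.smul_apply, smul_eq_mul, RingHom.id_apply, Finset.mul_sum]
        congr 1; funext i; ring }
  have heq : {s : Fin U → ℝ | ∃ x : EuclideanSpace ℝ (Fin d),
        (∀ r : Fin U, (∑ i, w r i * x i) + b r ≠ 0) ∧
        (∀ r : Fin U, s r = Real.sign ((∑ i, w r i * x i) + b r))} = SignSet f b := rfl
  rw [heq]
  refine ⟨signSet_finite f b, ?_⟩
  have h := key U (EuclideanSpace ℝ (Fin d)) f b
  rwa [finrank_euclideanSpace_fin] at h
end

section
/- Let g be C¹ on a neighborhood of the closed ball B = B_p(x₀, R), with g(x₀) > 0, and let L = max_{x ∈ B} ‖∇g(x)‖_q. Then the quantity min{g(x₀)/L, R} is a lower bound on the ℓp norm of any δ ∈ B_p(0, R) for which g(x₀ + δ) < 0. (This is the bound of Hein & Andriushchenko recovered as a special case.) -/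
open scoped ENNReal

/-- Hein–Andriushchenko bound as a special case: let `g` be `C¹` on an
open neighborhood of the closed ℓp ball `B = B_p(x₀, R)`, with `g x₀ > 0`, and let `L`
be the maximum over `B` of the dual (ℓq) norm of the gradient (the operator norm of the
Fréchet derivative).  Then `min (g x₀ / L) R` is a lower bound on the ℓp norm of any
perturbation `δ` with `‖δ‖ ≤ R` for which `g (x₀ + δ) < 0`. -/
theorem hein_bound_special_case {d : ℕ} {p : ℝ≥0∞} [Fact (1 ≤ p)]
    (g : PiLp p (fun _ : Fin d => ℝ) → ℝ)
    (x₀ : PiLp p (fun _ : Fin d => ℝ)) (R : ℝ) (hR : 0 < R)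
    (U : Set (PiLp p (fun _ : Fin d => ℝ))) (hU : IsOpen U)
    (hBU : Metric.closedBall x₀ R ⊆ U) (hC1 : ContDiffOn ℝ 1 g U)
    (hg : 0 < g x₀) (L : ℝ)
    (hL : IsGreatest ((fun x => ‖fderiv ℝ g x‖) '' Metric.closedBall x₀ R) L) :
    ∀ δ : PiLp p (fun _ : Fin d => ℝ), ‖δ‖ ≤ R → g (x₀ + δ) < 0 →
      min (g x₀ / L) R ≤ ‖δ‖ := by
  intro δ hδ hneg
  have hdiff : ∀ x ∈ Metric.closedBall x₀ R, DifferentiableAt ℝ g x := fun x hx =>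
    ((hC1.differentiableOn one_ne_zero) x (hBU hx)).differentiableAt (hU.mem_nhds (hBU hx))
  have hbound : ∀ x ∈ Metric.closedBall x₀ R, ‖fderiv ℝ g x‖ ≤ L := fun x hx =>
    hL.2 ⟨x, hx, rfl⟩
  have hx₀ : x₀ ∈ Metric.closedBall x₀ R := Metric.mem_closedBall_self hR.le
  have hxδ : x₀ + δ ∈ Metric.closedBall x₀ R := by
    simpa [Metric.mem_closedBall, dist_eq_norm] using hδ
  have key := (convex_closedBall x₀ R).norm_image_sub_le_of_norm_fderiv_le
    hdiff hbound hxδ hx₀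
  have h1 : g x₀ - g (x₀ + δ) ≤ L * ‖δ‖ := by
    calc g x₀ - g (x₀ + δ) ≤ ‖g x₀ - g (x₀ + δ)‖ := le_abs_self _
    _ ≤ L * ‖x₀ - (x₀ + δ)‖ := key
    _ = L * ‖δ‖ := by rw [show x₀ - (x₀ + δ) = -δ by abel, norm_neg]
  have h2 : g x₀ < L * ‖δ‖ := lt_of_lt_of_le (by linarith) h1
  have hLpos : 0 < L := by
    by_contra h
    push_neg at h
    have : L * ‖δ‖ ≤ 0 := mul_nonpos_of_nonpos_of_nonneg h (norm_nonneg _)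
    linarith
  have : g x₀ / L ≤ ‖δ‖ := by
    rw [div_le_iff₀ hLpos]
    nlinarith
  exact le_trans (min_le_left _ _) this
end
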